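/- arXiv:2204.08992 — 3 statements merged into one kernel-verified Lean document; each statement's English description precedes it below -/
import Mathlib

section
/- Let y₀ ∈ ℝ and let p ≠ q be points of the Euclidean plane with y(p) ≤ y₀, y(q) ≤ y₀ and dist(p,q) < 2. Then the set {z : dist(z,p) = 1 ∧ dist(z,q) = 1 ∧ y(z) ≥ y₀} contains at most one point. (Observation 2.1: two upper arcs of unit circles whose centers lie on or below a horizontal line intersect at most once on or above that line.) -/
/-- The Euclidean plane. -/
abbrev Plane := EuclideanSpace ℝ (Fin 2)

/-!
The point reflection in the midpoint of `pq` swaps the two circles, so it maps a common point `z`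
to another common point `z'`, distinct from `z` because `dist p q < 2`. Two distinct circles in the
plane meet in at most two points, so any common point `w` is `z` or `z'`. The heights of `z` and
`z'` add up to `p 1 + q 1 ≤ 2 y₀`; if both are `≥ y₀`, all four points lie on the line `y = y₀`,
where `zz' ⟂ pq` forces `z = z'`.
-/

open AffineIsometryEquiv EuclideanGeometry

section PointReflection

variable {V P : Type*} [NormedAddCommGroup V] [NormedSpace ℝ V] [MetricSpace P]
  [NormedAddTorsor V P]

theorem dist_pointReflection_midpoint_left (p q z : P) :
    dist (pointReflection ℝ (midpoint ℝ p q) z) p = dist z q := by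
  calc _ = dist (pointReflection ℝ (midpoint ℝ p q) z) (pointReflection ℝ (midpoint ℝ p q) q) := by
        rw [pointReflection_midpoint_right]
    _ = dist z q := dist_map _ z q

theorem dist_pointReflection_midpoint_right (p q z : P) :
    dist (pointReflection ℝ (midpoint ℝ p q) z) q = dist z p := by
  rw [midpoint_comm, dist_pointReflection_midpoint_left]

theorem pointReflection_midpoint_ne_self {p q z : P} (h : dist p q < dist z p + dist z q) :
    pointReflection ℝ (midpoint ℝ p q) z ≠ z := by
  rw [Ne, pointReflection_fixed_iff]
  rintro rfl
  rw [dist_midpoint_left, dist_midpoint_right, Real.norm_two] at h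
  linarith

end PointReflection

theorem Plane.pointReflection_midpoint_apply (p q z : Plane) (i : Fin 2) :
    pointReflection ℝ (midpoint ℝ p q) z i = p i + q i - z i := by
  simp only [midpoint_eq_smul_add, invOf_eq_inv, smul_add, pointReflection_apply, vsub_eq_sub,
    vadd_eq_add, PiLp.add_apply, PiLp.sub_apply, PiLp.smul_apply, smul_eq_mul]
  ring

theorem Plane.eq_of_inner_eq_zero_of_apply_one_eq {p q z w : Plane} (hpq : p ≠ q)
    (hp : p 1 = q 1) (hz : z 1 = w 1) (h : inner ℝ (q - p) (w - z) = 0) : z = w := by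
  have hp0 : p 0 ≠ q 0 := fun h0 => hpq (by ext i; fin_cases i <;> assumption)
  have hz0 : z 0 = w 0 := by
    simp only [EuclideanSpace.inner_eq_star_dotProduct, dotProduct, Fin.sum_univ_two] at h
    simp only [Fin.isValue, PiLp.sub_apply, WithLp.ofLp_sub, Pi.star_apply, Pi.sub_apply,
      star_trivial, hz, sub_self, hp, mul_zero, add_zero, mul_eq_zero, sub_eq_zero, hp0.symm,
      or_false] at h
    exact h.symm
  ext i; fin_cases i <;> assumption

/-- Two upper arcs of unit circles whose centers lie on or below a horizontal
line `y = y₀` intersect at most once on or above that line. -/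
theorem upper_arcs_cross_at_most_once (y₀ : ℝ) (p q : Plane)
    (hpq : p ≠ q) (hp : p 1 ≤ y₀) (hq : q 1 ≤ y₀) (hd : dist p q < 2) :
    Set.Subsingleton {z : Plane | dist z p = 1 ∧ dist z q = 1 ∧ z 1 ≥ y₀} := by
  rintro z ⟨hzp, hzq, hz⟩ w ⟨hwp, hwq, hw⟩
  set z' := pointReflection ℝ (midpoint ℝ p q) z
  have hz'p : dist z' p = 1 := (dist_pointReflection_midpoint_left p q z).trans hzq
  have hz'q : dist z' q = 1 := (dist_pointReflection_midpoint_right p q z).trans hzp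
  have hzz' : z ≠ z' := (pointReflection_midpoint_ne_self (by linarith)).symm
  obtain rfl | rfl := eq_of_dist_eq_of_dist_eq_of_finrank_eq_two (finrank_euclideanSpace_fin)
    hpq hzz' hzp hz'p hwp hzq hz'q hwq
  · rfl
  · have hw1 := Plane.pointReflection_midpoint_apply p q z 1
    exact Plane.eq_of_inner_eq_zero_of_apply_one_eq hpq (by linarith) (by linarith)
      (inner_vsub_vsub_of_dist_eq_of_dist_eq (hzp.trans hz'p.symm) (hzq.trans hz'q.symm))
end

section
/- Fix s = 1/√2 and reals x₀, y₀, and let T = {z : x₀ ≤ x(z) ≤ x₀+s and y₀ ≤ y(z) ≤ (y₀ + s − √(7/8)) + √(1 − (x(z) − x₀ − s/2)²)}. Then for every point q with y(q) ≤ y₀, the set {z : dist(z,q) = 1} ∩ T is preconnected, and every point z of this set satisfies y(z) ≥ y(q). (This is the paper's claim that for any unit disk D whose center lies on or below the line y = y₀, the intersection of ∂D with the extended cell T is either empty or a single arc lying on the upper half-circle of ∂D.) -/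
open Set Metric

theorem Set.OrdConnected.sep_le_of_subsingleton {α δ : Type*} [ConditionallyCompleteLinearOrder α]
    [TopologicalSpace α] [OrderTopology α] [DenselyOrdered α] [LinearOrder δ] [TopologicalSpace δ]
    [OrderClosedTopology δ] {J : Set α} (hJ : J.OrdConnected) {g : α → δ} (hg : ContinuousOn g J)
    {c : δ} (hc : {t ∈ J | g t = c}.Subsingleton) : {t ∈ J | g t ≤ c}.OrdConnected := by
  refine ⟨fun t₁ ht₁ t₂ ht₂ t ht ↦ ?_⟩
  have htJ : t ∈ J := hJ.out ht₁.1 ht₂.1 ht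
  refine ⟨htJ, ?_⟩
  by_contra! hct
  have hsub₁ : Icc t₁ t ⊆ J := hJ.out ht₁.1 htJ
  have hsub₂ : Icc t t₂ ⊆ J := hJ.out htJ ht₂.1
  obtain ⟨a, ha, hga⟩ := intermediate_value_Icc ht.1 (hg.mono hsub₁) ⟨ht₁.2, hct.le⟩
  obtain ⟨b, hb, hgb⟩ := intermediate_value_Icc' ht.2 (hg.mono hsub₂) ⟨ht₂.2, hct.le⟩
  have hab : a = b := hc ⟨hsub₁ ha, hga⟩ ⟨hsub₂ hb, hgb⟩
  have hat : a = t := le_antisymm ha.2 (hab ▸ hb.1)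
  exact hct.ne' (hat ▸ hga)

theorem ordConnected_setOf_sq_sub_le (a K : ℝ) : {t : ℝ | (t - a) ^ 2 ≤ K}.OrdConnected :=
  ⟨fun t₁ (h₁ : (t₁ - a) ^ 2 ≤ K) t₂ (h₂ : (t₂ - a) ^ 2 ≤ K) t ht ↦ by
    show (t - a) ^ 2 ≤ K
    nlinarith [mul_nonneg (sub_nonneg.2 ht.1) (sub_nonneg.2 ht.2), sq_nonneg (t - t₁),
      sq_nonneg (t₂ - t)]⟩

theorem dist_sq_eq_plane (z w : Plane) : dist z w ^ 2 = (z 0 - w 0) ^ 2 + (z 1 - w 1) ^ 2 := by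
  simp [EuclideanSpace.dist_sq_eq, Fin.sum_univ_two, Real.dist_eq, sq_abs]

theorem add_eq_add_of_mem_sphere_inter {p q a b : Plane} {r : ℝ} (hpq : p ≠ q) (hab : a ≠ b)
    (ha : a ∈ sphere p r ∩ sphere q r) (hb : b ∈ sphere p r ∩ sphere q r) : a + b = p + q := by
  have hap := dist_sq_eq_plane a p
  have haq := dist_sq_eq_plane a q
  have hbp := dist_sq_eq_plane b p
  have hbq := dist_sq_eq_plane b q
  rw [mem_sphere.1 ha.1] at hap
  rw [mem_sphere.1 ha.2] at haq
  rw [mem_sphere.1 hb.1] at hbp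
  rw [mem_sphere.1 hb.2] at hbq
  have hD : 0 < (a 0 - b 0) ^ 2 + (a 1 - b 1) ^ 2 := by
    rw [← dist_sq_eq_plane]; exact pow_pos (dist_pos.2 hab) 2
  have hE : 0 < (p 0 - q 0) ^ 2 + (p 1 - q 1) ^ 2 := by
    rw [← dist_sq_eq_plane]; exact pow_pos (dist_pos.2 hpq) 2
  -- `d = a - b` and `e = p - q` are orthogonal and nonzero, and `σ = a + b - p - q` is orthogonal
  -- to both, so `σ = 0`
  have hde : (a 0 - b 0) * (p 0 - q 0) + (a 1 - b 1) * (p 1 - q 1) = 0 := by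
    linear_combination (hap - hbp + hbq - haq) / 2
  have hσd : (a 0 + b 0 - p 0 - q 0) * (a 0 - b 0) + (a 1 + b 1 - p 1 - q 1) * (a 1 - b 1) = 0 := by
    linear_combination (hbp - hap + hbq - haq) / 2
  have hσe : (a 0 + b 0 - p 0 - q 0) * (p 0 - q 0) + (a 1 + b 1 - p 1 - q 1) * (p 1 - q 1) = 0 := by
    linear_combination (hap - haq + hbp - hbq) / 2
  set det := (a 0 - b 0) * (p 1 - q 1) - (a 1 - b 1) * (p 0 - q 0)
  have hdet : det ≠ 0 := by
    have : det ^ 2 = ((a 0 - b 0) ^ 2 + (a 1 - b 1) ^ 2) * ((p 0 - q 0) ^ 2 + (p 1 - q 1) ^ 2) := by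
      linear_combination
        (-((a 0 - b 0) * (p 0 - q 0) + (a 1 - b 1) * (p 1 - q 1))) * hde
    exact pow_ne_zero_iff two_ne_zero |>.1 (this ▸ (mul_pos hD hE).ne')
  ext i
  fin_cases i
  · have : (a 0 + b 0 - p 0 - q 0) * det = 0 := by
      linear_combination (p 1 - q 1) * hσd - (a 1 - b 1) * hσe
    simpa [sub_eq_zero, sub_sub, hdet] using this
  · have : (a 1 + b 1 - p 1 - q 1) * det = 0 := by
      linear_combination (a 0 - b 0) * hσe - (p 0 - q 0) * hσd
    simpa [sub_eq_zero, sub_sub, hdet] using this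

theorem subsingleton_sphere_inter_sphere_inter_setOf_le {p q : Plane} {r y₀ : ℝ} (hpq : p ≠ q)
    (h : p 1 + q 1 < 2 * y₀) : (sphere p r ∩ sphere q r ∩ {z : Plane | y₀ ≤ z 1}).Subsingleton := by
  rintro a ⟨ha, hay⟩ b ⟨hb, hby⟩
  by_contra hab
  have := congrArg (· 1) (add_eq_add_of_mem_sphere_inter hpq hab ha hb)
  simp only [PiLp.add_apply] at this
  linarith [hay.out, hby.out]

theorem le_add_sqrt_iff_mem_closedBall {z p : Plane} (h : p 1 < z 1) :
    z 1 ≤ p 1 + √(1 - (z 0 - p 0) ^ 2) ↔ z ∈ closedBall p 1 := by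
  rw [← sub_le_iff_le_add', Real.le_sqrt' (sub_pos.2 h), mem_closedBall,
    ← sq_le_one_iff₀ dist_nonneg, dist_sq_eq_plane]
  constructor <;> intro <;> linarith

noncomputable def upperArc (q : Plane) (t : ℝ) : Plane := !₂[t, q 1 + √(1 - (t - q 0) ^ 2)]

@[simp] theorem upperArc_apply_zero (q : Plane) (t : ℝ) : upperArc q t 0 = t := by simp [upperArc]

@[simp] theorem upperArc_apply_one (q : Plane) (t : ℝ) :
    upperArc q t 1 = q 1 + √(1 - (t - q 0) ^ 2) := by simp [upperArc]

theorem continuous_upperArc (q : Plane) : Continuous (upperArc q) := by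
  unfold upperArc; fun_prop

theorem upperArc_injective (q : Plane) : Function.Injective (upperArc q) :=
  fun t t' h ↦ by simpa using congrArg (· 0) h

theorem upperArc_mem_sphere {q : Plane} {t : ℝ} (h : (t - q 0) ^ 2 ≤ 1) :
    upperArc q t ∈ sphere q 1 := by
  rw [mem_sphere, ← pow_eq_one_iff_of_nonneg dist_nonneg two_ne_zero, dist_sq_eq_plane,
    upperArc_apply_zero, upperArc_apply_one, add_sub_cancel_left, Real.sq_sqrt (sub_nonneg.2 h)]
  ring

theorem upperArc_eq_of_mem_sphere {q z : Plane} (hz : z ∈ sphere q 1) (hzq : q 1 ≤ z 1) :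
    upperArc q (z 0) = z := by
  have hdist := dist_sq_eq_plane z q
  rw [mem_sphere.1 hz] at hdist
  have : √(1 - (z 0 - q 0) ^ 2) = z 1 - q 1 := by
    rw [Real.sqrt_eq_iff_eq_sq (by nlinarith) (sub_nonneg.2 hzq)]
    linarith
  ext i
  fin_cases i <;> simp [this]

theorem le_upperArc_apply_one {q : Plane} {y₀ t : ℝ} (ht : (t - q 0) ^ 2 ≤ 1 - (y₀ - q 1) ^ 2) :
    y₀ ≤ upperArc q t 1 := by
  rw [upperArc_apply_one, ← sub_le_iff_le_add']
  exact Real.le_sqrt_of_sq_le (by linarith)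

theorem sphere_inter_setOf_eq_image_upperArc {q : Plane} {y₀ : ℝ} (hq : q 1 ≤ y₀) (I : Set ℝ) :
    sphere q 1 ∩ {z : Plane | z 0 ∈ I ∧ y₀ ≤ z 1} =
      upperArc q '' ({t | (t - q 0) ^ 2 ≤ 1 - (y₀ - q 1) ^ 2} ∩ I) := by
  ext z
  constructor
  · rintro ⟨hzS, hzI, hzy⟩
    have hdist := dist_sq_eq_plane z q
    rw [mem_sphere.1 hzS] at hdist
    have := pow_le_pow_left₀ (sub_nonneg.2 hq) (sub_le_sub_right hzy (q 1)) 2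
    exact ⟨z 0, ⟨show (z 0 - q 0) ^ 2 ≤ _ by linarith, hzI⟩,
      upperArc_eq_of_mem_sphere hzS (hq.trans hzy)⟩
  · rintro ⟨t, ⟨ht, htI⟩, rfl⟩
    refine ⟨upperArc_mem_sphere (ht.out.trans ?_), by simpa using htI, le_upperArc_apply_one ht⟩
    nlinarith

theorem isPreconnected_sphere_inter_closedBall {p q : Plane} {y₀ : ℝ} (hq : q 1 ≤ y₀)
    (hp : p 1 < y₀) {I : Set ℝ} (hI : I.OrdConnected) :
    IsPreconnected (sphere q 1 ∩ {z : Plane | z 0 ∈ I ∧ y₀ ≤ z 1} ∩ closedBall p 1) := by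
  rw [sphere_inter_setOf_eq_image_upperArc hq, ← image_inter_preimage]
  set J := {t : ℝ | (t - q 0) ^ 2 ≤ 1 - (y₀ - q 1) ^ 2} ∩ I
  have hJ : J.OrdConnected := (ordConnected_setOf_sq_sub_le _ _).inter hI
  have hJS : ∀ t ∈ J, upperArc q t ∈ sphere q 1 := fun t ht ↦
    upperArc_mem_sphere (ht.1.out.trans (by nlinarith))
  refine (OrdConnected.isPreconnected ?_).image _ (continuous_upperArc q).continuousOn
  rcases eq_or_ne p q with rfl | hpq
  · rwa [inter_eq_left.2 fun t ht ↦ mem_preimage.2 (sphere_subset_closedBall (hJS t ht))]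
  · have hg : Continuous fun t ↦ dist (upperArc q t) p :=
      (continuous_upperArc q).dist continuous_const
    refine hJ.sep_le_of_subsingleton hg.continuousOn ?_
    have hsub := subsingleton_sphere_inter_sphere_inter_setOf_le (r := 1) (y₀ := y₀) hpq
      (by linarith)
    refine (hsub.preimage (upperArc_injective q)).anti ?_
    rintro t ⟨htJ, htp⟩
    exact ⟨⟨htp, hJS t htJ⟩, le_upperArc_apply_one htJ.1⟩

/-- For any unit circle whose center lies on or below the line `y = y₀`, its
intersection with the extended cell `T` (the square of side `1/√2` enlarged by
replacing its top edge with a unit-circle arc) is preconnected (a single arc,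
or empty) and lies on the upper half-circle. -/
theorem circle_inter_extended_cell_is_single_upper_arc (x₀ y₀ : ℝ) :
    let s : ℝ := 1 / Real.sqrt 2
    let T : Set Plane := {z : Plane | x₀ ≤ z 0 ∧ z 0 ≤ x₀ + s ∧ y₀ ≤ z 1 ∧
      z 1 ≤ (y₀ + s - Real.sqrt (7 / 8)) + Real.sqrt (1 - (z 0 - x₀ - s / 2) ^ 2)}
    ∀ q : Plane, q 1 ≤ y₀ →
      IsPreconnected ({z : Plane | dist z q = 1} ∩ T) ∧
      ∀ z ∈ {z : Plane | dist z q = 1} ∩ T, z 1 ≥ q 1 := by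
  intro s T q hq
  have hs : s < √(7 / 8) := by
    rw [Real.lt_sqrt (by positivity), div_pow, Real.sq_sqrt zero_le_two]
    norm_num
  set p : Plane := !₂[x₀ + s / 2, y₀ + s - √(7 / 8)]
  have hp : p 1 < y₀ := show y₀ + s - √(7 / 8) < y₀ by linarith
  have hT : {z : Plane | dist z q = 1} ∩ T =
      sphere q 1 ∩ {z : Plane | z 0 ∈ Icc x₀ (x₀ + s) ∧ y₀ ≤ z 1} ∩ closedBall p 1 := by
    ext z
    simp only [T, mem_inter_iff, mem_ofPred_eq, mem_sphere, mem_Icc, and_assoc]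
    refine and_congr_right fun _ ↦ and_congr_right fun _ ↦ and_congr_right fun _ ↦
      and_congr_right fun hz ↦ ?_
    rw [← le_add_sqrt_iff_mem_closedBall (hp.trans_le hz)]
    simp [p, sub_sub]
  refine ⟨hT ▸ isPreconnected_sphere_inter_closedBall hq hp ordConnected_Icc, ?_⟩
  rintro z ⟨-, -, -, hz, -⟩
  exact hq.trans hz
end

section
/- For every δ > 0 and every c > 0 there exists ρ₀ ≥ 2 such that for all ρ ≥ ρ₀, all reals n ≥ 1 and χ ≥ 0, and every sequence a : ℕ → ℝ satisfying a(0) ≤ 1 and, for all i ≥ 1, a(i) ≤ c·(ρ^i · (log ρ)/n)² · χ + c·ρ·(log ρ)² · a(i−1), one has a(i) ≤ ρ^(2(i+1)) · χ/n² + ρ^((i+1)(1+δ)) for all i ≥ 0. (This is the induction proved in the appendix to bound the sizes |Ξ_i| of the levels of the hierarchical cutting, yielding the size bound O(χ·r²/n² + r^{1+δ}).) -/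
open Real Filter

/-- The induction bounding the sizes of the levels of the hierarchical cutting:
if `a 0 ≤ 1` and `a i ≤ c·(ρ^i·log ρ/n)²·χ + c·ρ·(log ρ)²·a (i−1)` for all
`i ≥ 1`, then for `ρ` a large enough constant,
`a i ≤ ρ^(2(i+1))·χ/n² + ρ^((i+1)(1+δ))` for all `i`. -/
theorem hierarchical_cutting_size_induction (δ c : ℝ) (hδ : 0 < δ) (hc : 0 < c) :
    ∃ ρ₀ : ℝ, 2 ≤ ρ₀ ∧
      ∀ ρ : ℝ, ρ₀ ≤ ρ → ∀ n χ : ℝ, 1 ≤ n → 0 ≤ χ →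
        ∀ a : ℕ → ℝ, a 0 ≤ 1 →
          (∀ i : ℕ, 1 ≤ i →
            a i ≤ c * (ρ ^ (i : ℝ) * Real.log ρ / n) ^ 2 * χ
                  + c * ρ * (Real.log ρ) ^ 2 * a (i - 1)) →
          ∀ i : ℕ, a i ≤ ρ ^ ((2 * (i + 1) : ℕ) : ℝ) * χ / n ^ 2
                          + ρ ^ (((i : ℝ) + 1) * (1 + δ)) := by
  have hA : ∀ᶠ ρ : ℝ in atTop, 2 * c * (Real.log ρ) ^ 2 ≤ ρ := by
    have h := (isLittleO_log_rpow_rpow_atTop (2:ℝ) one_pos).bound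
      (c := 1 / (2 * c)) (by positivity)
    filter_upwards [h, eventually_ge_atTop (1:ℝ),
      Real.tendsto_log_atTop.eventually_ge_atTop 0] with ρ hb h1 hl
    rw [Real.norm_eq_abs, Real.norm_eq_abs, Real.rpow_one,
      abs_of_nonneg (Real.rpow_nonneg hl 2), abs_of_nonneg (by linarith),
      show Real.log ρ ^ (2:ℝ) = Real.log ρ ^ (2:ℕ) by
        rw [← Real.rpow_natCast (Real.log ρ) 2]; norm_num] at hb
    have h2c : (0:ℝ) < 2 * c := by positivity
    have h3 := mul_le_mul_of_nonneg_left hb h2c.le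
    have h4 : 2 * c * (1 / (2 * c) * ρ) = ρ := by field_simp
    linarith
  have hB : ∀ᶠ ρ : ℝ in atTop, c * (Real.log ρ) ^ 2 ≤ ρ ^ δ := by
    have h := (isLittleO_log_rpow_rpow_atTop (2:ℝ) hδ).bound
      (c := 1 / c) (by positivity)
    filter_upwards [h, eventually_ge_atTop (1:ℝ),
      Real.tendsto_log_atTop.eventually_ge_atTop 0] with ρ hb h1 hl
    rw [Real.norm_eq_abs, Real.norm_eq_abs,
      abs_of_nonneg (Real.rpow_nonneg hl 2),
      abs_of_nonneg (Real.rpow_nonneg (by linarith) δ),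
      show Real.log ρ ^ (2:ℝ) = Real.log ρ ^ (2:ℕ) by
        rw [← Real.rpow_natCast (Real.log ρ) 2]; norm_num] at hb
    have h3 := mul_le_mul_of_nonneg_left hb hc.le
    have h4 : c * (1 / c * ρ ^ δ) = ρ ^ δ := by field_simp
    linarith
  obtain ⟨ρ₁, hρ₁⟩ := (hA.and (hB.and (eventually_ge_atTop (2:ℝ)))).exists_forall_of_atTop
  refine ⟨max 2 ρ₁, le_max_left _ _, ?_⟩
  intro ρ hρ n χ hn hχ a ha0 hrec
  obtain ⟨hA', hB', h2⟩ := hρ₁ ρ (le_trans (le_max_right _ _) hρ)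
  have hρ0 : (0:ℝ) < ρ := by linarith
  have hρ1 : (1:ℝ) ≤ ρ := by linarith
  have hl0 : 0 ≤ Real.log ρ := Real.log_nonneg hρ1
  have hn0 : (0:ℝ) < n := by linarith
  intro i
  induction i with
  | zero =>
    have h1 : (1:ℝ) ≤ ρ ^ ((((0:ℕ):ℝ) + 1) * (1 + δ)) :=
      Real.one_le_rpow hρ1 (by push_cast; nlinarith)
    have h2' : 0 ≤ ρ ^ ((2 * (0 + 1) : ℕ) : ℝ) * χ / n ^ 2 := by positivity
    exact ha0.trans (h1.trans (le_add_of_nonneg_left h2'))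
  | succ i ih =>
    have hr := hrec (i+1) (Nat.le_add_left 1 i)
    simp only [Nat.add_sub_cancel] at hr
    have key : a (i+1) ≤ c * ρ ^ ((2*(i+1) : ℕ) : ℝ) * (Real.log ρ)^2 * χ / n^2
        + c * ρ * (Real.log ρ)^2 * (ρ ^ ((2 * (i + 1) : ℕ) : ℝ) * χ / n ^ 2
                          + ρ ^ (((i : ℝ) + 1) * (1 + δ))) := by
      refine hr.trans ?_
      have e : c * (ρ ^ ((i+1 : ℕ) : ℝ) * Real.log ρ / n) ^ 2 * χ
          = c * ρ ^ ((2*(i+1) : ℕ) : ℝ) * (Real.log ρ)^2 * χ / n^2 := by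
        rw [div_pow, mul_pow, ← Real.rpow_natCast (ρ ^ ((i+1 : ℕ) : ℝ)) 2,
          ← Real.rpow_mul hρ0.le]
        push_cast
        ring_nf
      rw [e]
      have := mul_le_mul_of_nonneg_left ih (by positivity : 0 ≤ c * ρ * (Real.log ρ)^2)
      linarith
    refine key.trans ?_
    have hx : c * ρ ^ ((2*(i+1) : ℕ) : ℝ) * (Real.log ρ)^2 * χ / n^2
        + c * ρ * (Real.log ρ)^2 * (ρ ^ ((2 * (i + 1) : ℕ) : ℝ) * χ / n ^ 2)
        ≤ ρ ^ ((2 * (i + 1 + 1) : ℕ) : ℝ) * χ / n ^ 2 := by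
      have e2 : ρ ^ ((2 * (i + 1 + 1) : ℕ) : ℝ) = ρ ^ (2:ℝ) * ρ ^ ((2 * (i + 1) : ℕ) : ℝ) := by
        rw [← Real.rpow_add hρ0]
        congr 1
        push_cast; ring
      have e4 : ρ ^ (2:ℝ) = ρ ^ 2 := by
        rw [show (2:ℝ) = ((2:ℕ):ℝ) by norm_num, Real.rpow_natCast]
      rw [e2, e4]
      have hP : (0:ℝ) ≤ ρ ^ ((2 * (i + 1) : ℕ) : ℝ) * χ / n^2 := by positivity
      have hc2 : c * (Real.log ρ)^2 + c * ρ * (Real.log ρ)^2 ≤ ρ^2 := by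
        nlinarith [sq_nonneg (Real.log ρ)]
      calc c * ρ ^ ((2*(i+1) : ℕ) : ℝ) * (Real.log ρ)^2 * χ / n^2
            + c * ρ * (Real.log ρ)^2 * (ρ ^ ((2 * (i + 1) : ℕ) : ℝ) * χ / n ^ 2)
          = (c * (Real.log ρ)^2 + c * ρ * (Real.log ρ)^2)
              * (ρ ^ ((2 * (i + 1) : ℕ) : ℝ) * χ / n^2) := by ring
        _ ≤ ρ^2 * (ρ ^ ((2 * (i + 1) : ℕ) : ℝ) * χ / n^2) :=
            mul_le_mul_of_nonneg_right hc2 hP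
        _ = ρ^2 * ρ ^ ((2 * (i + 1) : ℕ) : ℝ) * χ / n^2 := by ring
    have hy : c * ρ * (Real.log ρ)^2 * ρ ^ (((i : ℝ) + 1) * (1 + δ))
        ≤ ρ ^ ((((i+1 : ℕ) : ℝ) + 1) * (1 + δ)) := by
      have e3 : ρ ^ ((((i+1 : ℕ) : ℝ) + 1) * (1 + δ))
          = ρ ^ δ * ρ * ρ ^ (((i : ℝ) + 1) * (1 + δ)) := by
        rw [show ((((i+1 : ℕ) : ℝ) + 1) * (1 + δ)) = δ + (1 + ((i:ℝ)+1)*(1+δ)) by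
            push_cast; ring,
          Real.rpow_add hρ0, Real.rpow_add hρ0, Real.rpow_one]
        ring
      rw [e3]
      calc c * ρ * (Real.log ρ)^2 * ρ ^ (((i : ℝ) + 1) * (1 + δ))
          = (c * (Real.log ρ)^2) * (ρ * ρ ^ (((i : ℝ) + 1) * (1 + δ))) := by ring
        _ ≤ ρ ^ δ * (ρ * ρ ^ (((i : ℝ) + 1) * (1 + δ))) :=
            mul_le_mul_of_nonneg_right hB' (by positivity)
        _ = ρ ^ δ * ρ * ρ ^ (((i : ℝ) + 1) * (1 + δ)) := by ring
    calc c * ρ ^ ((2*(i+1) : ℕ) : ℝ) * (Real.log ρ)^2 * χ / n^2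
        + c * ρ * (Real.log ρ)^2 * (ρ ^ ((2 * (i + 1) : ℕ) : ℝ) * χ / n ^ 2
                          + ρ ^ (((i : ℝ) + 1) * (1 + δ)))
        = (c * ρ ^ ((2*(i+1) : ℕ) : ℝ) * (Real.log ρ)^2 * χ / n^2
          + c * ρ * (Real.log ρ)^2 * (ρ ^ ((2 * (i + 1) : ℕ) : ℝ) * χ / n ^ 2))
          + c * ρ * (Real.log ρ)^2 * ρ ^ (((i : ℝ) + 1) * (1 + δ)) := by ring
      _ ≤ ρ ^ ((2 * (i + 1 + 1) : ℕ) : ℝ) * χ / n ^ 2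
          + ρ ^ ((((i+1 : ℕ) : ℝ) + 1) * (1 + δ)) := add_le_add hx hy
end
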